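/- arXiv:1311.6968 — 3 statements merged into one kernel-verified Lean document; each statement's English description precedes it below -/
import Mathlib

section
/- Let b = (b_1,…,b_n) ∈ 𝓑' and let b' = (b_1,…,b_{i−1}, b_i + 1, b_{i+1},…,b_n) for some index i, and suppose that also b' ∈ 𝓑'. Then I_{b'} ⊆ I_b, and x_i · I_b ⊆ I_{b'}. -/
/-!
Splitting off the last variable gives
`h_{c+1}(x_1,…,x_i) = h_{c+1}(x_1,…,x_{i-1}) + x_i h_c(x_1,…,x_i)`.
With `c = b_i`, the `i`-th generator of `I_{b'}` and `x_i` times the `i`-th generator of `I_b`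
therefore differ by `h_{b_i+1}(x_1,…,x_{i-1})`, and all other generators agree. Membership of both
`b` and `b'` in `𝓑'` forces `b_{i-1} = b_i + 1`, so this difference is the common `(i-1)`-st
generator of `I_b` and `I_{b'}` (or `0` when `i = 1`).
-/

open MvPolynomial

/-- The complete homogeneous symmetric polynomial of degree `j` in the variables indexed
by the finite set `S`. -/
noncomputable def hset (n : ℕ) (S : Finset (Fin n)) (j : ℕ) : MvPolynomial (Fin n) ℂ :=
  ∑ μ ∈ Finset.univ.filter (fun μ : Sym (Fin n) j => ∀ i ∈ μ, i ∈ S),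
    (μ.val.map MvPolynomial.X).prod

/-- The complete homogeneous symmetric polynomial `h_j(x_1, …, x_k)` of degree `j` in the
first `k` variables (these are the 0-based indices `0, …, k-1`). -/
noncomputable def hfirst (n k j : ℕ) : MvPolynomial (Fin n) ℂ :=
  hset n (Finset.univ.filter (fun i : Fin n => (i : ℕ) < k)) j

/-- The ideal `I_b` generated by `h_{b_1}(x_1), h_{b_2}(x_1,x_2), …, h_{b_n}(x_1,…,x_n)`. -/
noncomputable def Ib {n : ℕ} (b : Fin n → ℕ) : Ideal (MvPolynomial (Fin n) ℂ) :=
  Ideal.span (Set.range fun i : Fin n => hfirst n ((i : ℕ) + 1) (b i))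

/-- `b ∈ 𝓑'`: a sequence of positive integers with `b i ≥ b (i+1) ≥ b i - 1` for all `i`. -/
def Bprime {n : ℕ} (b : Fin n → ℕ) : Prop :=
  (∀ i, 0 < b i) ∧ ∀ (i : ℕ) (h : i + 1 < n),
    b ⟨i + 1, h⟩ ≤ b ⟨i, Nat.lt_of_succ_lt h⟩ ∧
      b ⟨i, Nat.lt_of_succ_lt h⟩ ≤ b ⟨i + 1, h⟩ + 1

section CompleteHomogeneous

variable {n : ℕ}

/-- A monomial of `h_{j+1}(S ∪ {a})` either avoids `x_a`, or is `x_a` times a monomial of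
`h_j(S ∪ {a})`. -/
theorem hset_insert_succ {a : Fin n} {S : Finset (Fin n)} (ha : a ∉ S) (j : ℕ) :
    hset n (insert a S) (j + 1) = hset n S (j + 1) + X a * hset n (insert a S) j := by
  unfold hset
  rw [← Finset.sum_filter_add_sum_filter_not _ (fun μ => a ∉ μ)]
  congr 1
  · refine Finset.sum_congr ?_ fun _ _ => rfl
    ext μ
    simp only [Finset.mem_filter, Finset.mem_univ, true_and, Finset.mem_insert]
    constructor
    · rintro ⟨hμ, haμ⟩ k hk
      exact (hμ k hk).resolve_left fun h => haμ (h ▸ hk)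
    · exact fun hμ => ⟨fun k hk => Or.inr (hμ k hk), fun haμ => ha (hμ a haμ)⟩
  · rw [Finset.mul_sum]
    refine Finset.sum_bij' (fun μ hμ => μ.erase a (by simpa using (Finset.mem_filter.mp hμ).2))
      (fun ν _ => a ::ₛ ν) ?_ ?_ (fun μ _ => Sym.cons_erase _)
      (fun ν _ => Sym.erase_cons_head ν a) ?_
    · simp only [Finset.mem_filter, Finset.mem_univ, true_and]
      exact fun μ hμ k hk => hμ.1 k (Multiset.mem_of_mem_erase hk)
    · simp only [Finset.mem_filter, Finset.mem_univ, true_and, not_not]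
      refine fun ν hν => ⟨fun k hk => ?_, Sym.mem_cons_self a ν⟩
      rcases Sym.mem_cons.mp hk with rfl | hk
      · exact Finset.mem_insert_self k S
      · exact hν k hk
    · intro μ hμ
      have haμ : a ∈ μ := by simpa using (Finset.mem_filter.mp hμ).2
      conv_lhs => rw [← Sym.cons_erase haμ]
      simp [Sym.cons]

theorem hfirst_zero_succ (j : ℕ) : hfirst n 0 (j + 1) = 0 := by
  refine Finset.sum_eq_zero fun μ hμ => ?_
  obtain ⟨k, ν, rfl⟩ := μ.exists_eq_cons_of_succ
  simpa using (Finset.mem_filter.mp hμ).2 k (Sym.mem_cons_self k ν)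

theorem hfirst_succ_succ (k : Fin n) (j : ℕ) :
    hfirst n (k + 1) (j + 1) = hfirst n k (j + 1) + X k * hfirst n (k + 1) j := by
  have hS : Finset.univ.filter (fun l : Fin n => (l : ℕ) < k + 1)
      = insert k (Finset.univ.filter fun l : Fin n => (l : ℕ) < k) := by
    ext l
    simp only [Finset.mem_filter, Finset.mem_univ, true_and, Finset.mem_insert, Fin.ext_iff]
    omega
  rw [hfirst, hfirst, hfirst, hS, hset_insert_succ (by simp)]

theorem hfirst_mem_Ib (b : Fin n → ℕ) (j : Fin n) : hfirst n (j + 1) (b j) ∈ Ib b :=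
  Ideal.subset_span ⟨j, rfl⟩

end CompleteHomogeneous

section RaiseOneEntry

variable {n : ℕ} {b b' : Fin n → ℕ} {i : Fin n}

theorem Bprime.apply_pred_of_raise (hb : Bprime b) (hb' : Bprime b')
    (hi : b' i = b i + 1) (hrest : ∀ j, j ≠ i → b' j = b j) {m : ℕ} (hm : (i : ℕ) = m + 1) :
    b ⟨m, by omega⟩ = b i + 1 := by
  have hm1 : m + 1 < n := hm ▸ i.isLt
  have hsucc : (⟨m + 1, hm1⟩ : Fin n) = i := Fin.ext hm.symm
  have hne : (⟨m, by omega⟩ : Fin n) ≠ i := fun h => by simp [Fin.ext_iff] at h; omega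
  have hle := (hb.2 m hm1).2
  have hge := (hb'.2 m hm1).1
  rw [hsucc] at hle hge
  rw [hi, hrest _ hne] at hge
  omega

theorem hfirst_raise_mem_Ib (hb : Bprime b) (hb' : Bprime b')
    (hi : b' i = b i + 1) (hrest : ∀ j, j ≠ i → b' j = b j)
    (c : Fin n → ℕ) (hc : ∀ j, j ≠ i → c j = b j) : hfirst n i (b i + 1) ∈ Ib c := by
  rcases hm : (i : ℕ) with _ | m
  · rw [hfirst_zero_succ]
    exact zero_mem _
  · have hne : (⟨m, by omega⟩ : Fin n) ≠ i := fun h => by simp [Fin.ext_iff] at h; omega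
    rw [← hb.apply_pred_of_raise hb' hi hrest hm, ← hc _ hne]
    exact hfirst_mem_Ib c ⟨m, by omega⟩

end RaiseOneEntry

/-- If `b ∈ 𝓑'` and `b'` is obtained from `b` by increasing the `i`-th entry by one, and
also `b' ∈ 𝓑'`, then `I_{b'} ⊆ I_b` while `x_i · I_b ⊆ I_{b'}`. -/
theorem stmt6 {n : ℕ} (b b' : Fin n → ℕ) (i : Fin n) (hb : Bprime b) (hb' : Bprime b')
    (hi : b' i = b i + 1) (hrest : ∀ j, j ≠ i → b' j = b j) :
    Ib b' ≤ Ib b ∧ ∀ p ∈ Ib b, X i * p ∈ Ib b' := by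
  have hdiff_b := hfirst_raise_mem_Ib hb hb' hi hrest b fun _ _ => rfl
  have hdiff_b' := hfirst_raise_mem_Ib hb hb' hi hrest b' hrest
  have hrecur := hfirst_succ_succ i (b i)
  refine ⟨Ideal.span_le.mpr ?_, fun p hp => ?_⟩
  · rintro _ ⟨j, rfl⟩
    change hfirst n (j + 1) (b' j) ∈ Ib b
    obtain rfl | hji := eq_or_ne j i
    · rw [hi, hrecur]
      exact add_mem hdiff_b (Ideal.mul_mem_left _ _ (hfirst_mem_Ib b j))
    · rw [hrest j hji]
      exact hfirst_mem_Ib b j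
  · suffices Ib b ≤ Submodule.comap (LinearMap.mulLeft (MvPolynomial (Fin n) ℂ) (X i)) (Ib b')
      from this hp
    refine Ideal.span_le.mpr ?_
    rintro _ ⟨j, rfl⟩
    change X i * hfirst n (j + 1) (b j) ∈ Ib b'
    obtain rfl | hji := eq_or_ne j i
    · rw [eq_sub_of_add_eq' hrecur.symm]
      exact sub_mem (hi ▸ hfirst_mem_Ib b' j) hdiff_b'
    · rw [← hrest j hji]
      exact Ideal.mul_mem_left _ _ (hfirst_mem_Ib b' j)
end

section
/- For every b ∈ 𝓑', the R-module R_b is isomorphic to its ℂ-linear dual Hom_ℂ(R_b, ℂ), where R acts on the dual by (r · f)(m) = f(r · m). -/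
open MvPolynomial

/-!
For the lexicographic order in which later variables dominate, `h_{b_i}(x_1, …, x_i)` is monic
with leading monomial `x_i ^ b_i`. These leading monomials are pairwise coprime, so the
generators form a Gröbner basis (Buchberger's first criterion): reduction to normal form is a
well-defined linear map that kills `I_b` and takes values in the span of the standard monomials
`x^a`, `a_i < b_i`. Hence `R_b` is finite-dimensional, and the coefficient `λ` of the socle
monomial `x^t = ∏ x_i ^ (b_i - 1)` in the normal form defines a pairing `(u, v) ↦ λ (u v)`. It is
nondegenerate: if `x^a` is the leading monomial of the normal form of `u`, then `λ (u x^(t - a))`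
is its leading coefficient, because multiplying the other terms by `x^(t - a)` lands strictly
below `x^t`, and normal forms never increase monomials. Since `λ (u v)` only depends on the
product `u v`, the resulting isomorphism `R_b ≃ Hom(R_b, ℂ)` is `R`-linear.
-/

open scoped MonomialOrder

theorem Multiset.toFinsupp_replicate {σ : Type*} [DecidableEq σ] (j : ℕ) (i : σ) :
    Multiset.toFinsupp (Multiset.replicate j i) = Finsupp.single i j := by
  rw [Multiset.toFinsupp_eq_iff, Finsupp.toMultiset_single, Multiset.nsmul_singleton]

theorem MvPolynomial.prod_map_X_eq_monomial {σ R : Type*} [CommSemiring R] [DecidableEq σ]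
    (s : Multiset σ) :
    (s.map (X : σ → MvPolynomial σ R)).prod = monomial (Multiset.toFinsupp s) 1 := by
  induction s using Multiset.induction with
  | empty => simp
  | cons a s ih =>
    rw [Multiset.map_cons, Multiset.prod_cons, ih, X, monomial_mul, one_mul,
      ← Multiset.singleton_add, Multiset.toFinsupp_add, Multiset.toFinsupp_singleton]

namespace MonomialOrder

variable {σ R : Type*} [CommRing R] (m : MonomialOrder σ)

theorem wellFounded_lt : WellFounded fun c d : σ →₀ ℕ => c ≺[m] d :=
  InvImage.wf m.toSyn _root_.wellFounded_lt

theorem lt_degree_of_mem_support_sub_leadingTerm {f : MvPolynomial σ R} {c : σ →₀ ℕ}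
    (hc : c ∈ (f - m.leadingTerm f).support) : c ≺[m] m.degree f := by
  refine lt_of_le_of_ne ((m.le_degree hc).trans (m.degree_sub_leadingTerm_le f)) fun h => ?_
  rw [m.toSyn.injective h, mem_support_iff] at hc
  classical
  simp [leadingTerm, leadingCoeff, coeff_monomial] at hc

variable {m} in
theorem lt_of_mem_support_monomial_mul {p : MvPolynomial σ R} {d δ ν : σ →₀ ℕ} {r : R}
    (hp : ∀ c ∈ p.support, c ≺[m] d) (hν : ν ∈ (monomial δ r * p).support) : ν ≺[m] δ + d := by
  rw [mem_support_iff, coeff_monomial_mul'] at hν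
  split_ifs at hν with hδ
  · rw [← add_tsub_cancel_of_le hδ, map_add, map_add]
    exact add_lt_add_right (hp _ (mem_support_iff.mpr (right_ne_zero_of_mul hν))) _
  · exact absurd rfl hν

theorem degree_eq_and_monic_of_coeff_eq_one [Nontrivial R] {f : MvPolynomial σ R}
    {d : σ →₀ ℕ} (hd : f.coeff d = 1) (hle : ∀ c ∈ f.support, c ≼[m] d) :
    m.degree f = d ∧ m.Monic f := by
  have hdeg : m.degree f = d := m.toSyn.injective <| le_antisymm (m.degree_le_iff.mpr hle)
    (m.le_degree (mem_support_iff.mpr (by rw [hd]; exact one_ne_zero)))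
  exact ⟨hdeg, by rw [Monic, leadingCoeff, hdeg, hd]⟩

/-- The lexicographic order in which later variables dominate (`lex` for the reversed order
on `σ`). -/
noncomputable def lexLast (σ : Type*) [LinearOrder σ] [WellFoundedLT σ] : MonomialOrder σ :=
  lex (σ := σᵒᵈ)

theorem lexLast_lt_iff {σ : Type*} [LinearOrder σ] [WellFoundedLT σ] {c d : σ →₀ ℕ} :
    c ≺[lexLast σ] d ↔ ∃ k, (∀ l, k < l → c l = d l) ∧ c k < d k :=
  Finsupp.Lex.lt_iff

theorem toFinsupp_le_lexLast_single {σ : Type*} [LinearOrder σ] [WellFoundedLT σ]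
    {s : Multiset σ} {i : σ} (hs : ∀ k ∈ s, k ≤ i) :
    Multiset.toFinsupp s ≼[lexLast σ] Finsupp.single i (Multiset.card s) := by
  by_cases hrep : ∀ k ∈ s, i = k
  · rw [Multiset.eq_replicate_card.mpr fun k hk => (hrep k hk).symm, Multiset.toFinsupp_replicate,
      Multiset.card_replicate]
  refine le_of_lt (lexLast_lt_iff.mpr ⟨i, fun l hil => ?_, ?_⟩)
  · rw [Multiset.toFinsupp_apply, Finsupp.single_eq_of_ne hil.ne', Multiset.count_eq_zero]
    exact fun hl => (hs l hl).not_gt hil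
  · rw [Multiset.toFinsupp_apply, Finsupp.single_eq_same]
    exact (Multiset.count_le_card i s).lt_of_ne (mt Multiset.count_eq_card.mp hrep)

end MonomialOrder

theorem exists_linearEquiv_dual_of_separating {K A : Type*} [Field K] [CommRing A] [Algebra K A]
    [FiniteDimensional K A] (φ : A →ₗ[K] K) (hφ : ∀ a, (∀ x, φ (a * x) = 0) → a = 0) :
    ∃ e : A ≃ₗ[K] Module.Dual K A, ∀ a x, e a x = φ (a * x) := by
  let B : LinearMap.BilinForm K A := (LinearMap.mul K A).compr₂ φ
  have hB : B.Nondegenerate := (LinearMap.IsRefl.nondegenerate_iff_separatingLeft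
    fun x y h => by simpa [B, mul_comm] using h).mpr hφ
  exact ⟨B.toDual hB, fun _ _ => rfl⟩

structure PurePowerFamily {σ : Type*} (m : MonomialOrder σ) (R : Type*) [CommRing R] where
  exp : σ → ℕ
  poly : σ → MvPolynomial σ R
  degree_poly : ∀ i, m.degree (poly i) = Finsupp.single i (exp i)
  monic_poly : ∀ i, m.Monic (poly i)

namespace PurePowerFamily

open Finsupp (single)

variable {σ R : Type*} [CommRing R] {m : MonomialOrder σ} (G : PurePowerFamily m R)

noncomputable def ideal : Ideal (MvPolynomial σ R) := Ideal.span (Set.range G.poly)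

def IsStandard (μ : σ →₀ ℕ) : Prop := ∀ i, μ i < G.exp i

noncomputable def tail (i : σ) : MvPolynomial σ R := G.poly i - monomial (single i (G.exp i)) 1

theorem tail_eq_sub_leadingTerm (i : σ) : G.tail i = G.poly i - m.leadingTerm (G.poly i) := by
  rw [tail, MonomialOrder.leadingTerm, (G.monic_poly i).leadingCoeff_eq_one, G.degree_poly]

theorem lt_of_mem_support_tail {i : σ} {c : σ →₀ ℕ} (hc : c ∈ (G.tail i).support) :
    c ≺[m] single i (G.exp i) := by
  rw [G.tail_eq_sub_leadingTerm] at hc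
  simpa [G.degree_poly] using m.lt_degree_of_mem_support_sub_leadingTerm hc

theorem monomial_add_single_mul_poly (δ : σ →₀ ℕ) (i j : σ) :
    monomial (δ + single j (G.exp j)) 1 * G.poly i =
      monomial (δ + single i (G.exp i)) 1 * G.poly j + monomial δ 1 * G.tail i * G.poly j
        - monomial δ 1 * G.tail j * G.poly i := by
  have hmul : ∀ s, monomial (δ + s) (1 : R) = monomial δ 1 * monomial s 1 := fun s => by
    rw [monomial_mul, one_mul]
  rw [hmul, hmul, tail, tail]
  ring

noncomputable def reduction (μ : σ →₀ ℕ) (i : σ) : MvPolynomial σ R :=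
  monomial μ 1 - monomial (μ - single i (G.exp i)) 1 * G.poly i

theorem lt_of_mem_support_reduction {μ ν : σ →₀ ℕ} {i : σ} (hi : G.exp i ≤ μ i)
    (hν : ν ∈ (G.reduction μ i).support) : ν ≺[m] μ := by
  have hsplit : G.reduction μ i = -(monomial (μ - single i (G.exp i)) 1 * G.tail i) := by
    rw [reduction, tail, mul_sub, monomial_mul, one_mul,
      tsub_add_cancel_of_le (Finsupp.single_le_iff.mpr hi)]
    ring
  rw [hsplit, support_neg] at hν
  simpa [tsub_add_cancel_of_le (Finsupp.single_le_iff.mpr hi)] using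
    MonomialOrder.lt_of_mem_support_monomial_mul (fun _ => G.lt_of_mem_support_tail) hν

theorem exists_exp_le_of_not_isStandard {μ : σ →₀ ℕ} (h : ¬ G.IsStandard μ) :
    ∃ i, G.exp i ≤ μ i := by
  simpa [IsStandard] using h

noncomputable def pivot {μ : σ →₀ ℕ} (h : ¬ G.IsStandard μ) : σ :=
  (G.exists_exp_le_of_not_isStandard h).choose

theorem exp_pivot_le {μ : σ →₀ ℕ} (h : ¬ G.IsStandard μ) : G.exp (G.pivot h) ≤ μ (G.pivot h) :=
  (G.exists_exp_le_of_not_isStandard h).choose_spec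

open Classical in
noncomputable def normalFormMonomial : (σ →₀ ℕ) → MvPolynomial σ R :=
  m.wellFounded_lt.fix fun μ rec =>
    if h : G.IsStandard μ then monomial μ 1
    else ∑ ν ∈ (G.reduction μ (G.pivot h)).support.attach,
      coeff ν.1 (G.reduction μ (G.pivot h)) •
        rec ν (G.lt_of_mem_support_reduction (G.exp_pivot_le h) ν.2)

noncomputable def normalForm : MvPolynomial σ R →ₗ[R] MvPolynomial σ R :=
  (basisMonomials σ R).constr R G.normalFormMonomial

theorem normalForm_monomial (μ : σ →₀ ℕ) (c : R) :
    G.normalForm (monomial μ c) = c • G.normalFormMonomial μ := by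
  have h := (basisMonomials σ R).constr_basis R G.normalFormMonomial μ
  rw [coe_basisMonomials] at h
  rw [← mul_one c, ← smul_eq_mul, ← smul_monomial, map_smul, normalForm, h, smul_eq_mul, mul_one]

theorem normalForm_eq_sum (p : MvPolynomial σ R) :
    G.normalForm p = ∑ μ ∈ p.support, coeff μ p • G.normalFormMonomial μ := by
  conv_lhs => rw [p.as_sum]
  simp only [map_sum, normalForm_monomial]

theorem normalFormMonomial_of_isStandard {μ : σ →₀ ℕ} (h : G.IsStandard μ) :
    G.normalFormMonomial μ = monomial μ 1 := by
  rw [normalFormMonomial, WellFounded.fix_eq, dif_pos h]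

theorem normalFormMonomial_of_not_isStandard {μ : σ →₀ ℕ} (h : ¬ G.IsStandard μ) :
    G.normalFormMonomial μ = G.normalForm (G.reduction μ (G.pivot h)) := by
  rw [normalFormMonomial, WellFounded.fix_eq, dif_neg h, normalForm_eq_sum]
  exact Finset.sum_attach _ fun ν => coeff ν _ • G.normalFormMonomial ν

theorem exists_mem_support_of_mem_support_normalForm {p : MvPolynomial σ R} {ν : σ →₀ ℕ}
    (hν : ν ∈ (G.normalForm p).support) :
    ∃ μ ∈ p.support, ν ∈ (G.normalFormMonomial μ).support := by
  classical
  rw [normalForm_eq_sum] at hν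
  obtain ⟨μ, hμ, hν⟩ := Finset.mem_biUnion.mp (support_sum hν)
  exact ⟨μ, hμ, support_smul hν⟩

theorem isStandard_and_le_of_mem_support_normalFormMonomial (μ : σ →₀ ℕ) :
    ∀ ν ∈ (G.normalFormMonomial μ).support, G.IsStandard ν ∧ ν ≼[m] μ := by
  induction μ using m.wellFounded_lt.induction with
  | _ μ ih =>
  intro ν hν
  by_cases h : G.IsStandard μ
  · rw [G.normalFormMonomial_of_isStandard h] at hν
    rw [Finset.mem_singleton.mp (support_monomial_subset hν)]
    exact ⟨h, le_rfl⟩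
  · rw [G.normalFormMonomial_of_not_isStandard h] at hν
    obtain ⟨ρ, hρ, hν⟩ := G.exists_mem_support_of_mem_support_normalForm hν
    have hρμ := G.lt_of_mem_support_reduction (G.exp_pivot_le h) hρ
    obtain ⟨hstd, hle⟩ := ih ρ hρμ ν hν
    exact ⟨hstd, hle.trans hρμ.le⟩

theorem isStandard_of_mem_support_normalForm {p : MvPolynomial σ R} {ν : σ →₀ ℕ}
    (hν : ν ∈ (G.normalForm p).support) : G.IsStandard ν :=
  have ⟨μ, _, hν⟩ := G.exists_mem_support_of_mem_support_normalForm hν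
  (G.isStandard_and_le_of_mem_support_normalFormMonomial μ ν hν).1

theorem coeff_normalFormMonomial_eq_zero_of_lt {μ ν : σ →₀ ℕ} (h : μ ≺[m] ν) :
    coeff ν (G.normalFormMonomial μ) = 0 :=
  notMem_support_iff.mp fun hν =>
    (G.isStandard_and_le_of_mem_support_normalFormMonomial μ ν hν).2.not_gt h

theorem sub_normalForm_mem_of_forall {p : MvPolynomial σ R}
    (h : ∀ μ ∈ p.support, monomial μ 1 - G.normalFormMonomial μ ∈ G.ideal) :
    p - G.normalForm p ∈ G.ideal := by
  have hp : p = ∑ μ ∈ p.support, coeff μ p • monomial μ (1 : R) := by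
    conv_lhs => rw [p.as_sum]
    simp only [smul_monomial, smul_eq_mul, mul_one]
  rw [normalForm_eq_sum, sub_eq_add_neg, ← Finset.sum_neg_distrib]
  nth_rewrite 1 [hp]
  rw [← Finset.sum_add_distrib]
  refine G.ideal.sum_mem fun μ hμ => ?_
  rw [← smul_neg, ← smul_add, ← sub_eq_add_neg]
  exact Submodule.smul_of_tower_mem _ _ (h μ hμ)

theorem monomial_sub_normalFormMonomial_mem (μ : σ →₀ ℕ) :
    monomial μ 1 - G.normalFormMonomial μ ∈ G.ideal := by
  induction μ using m.wellFounded_lt.induction with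
  | _ μ ih =>
  by_cases h : G.IsStandard μ
  · rw [G.normalFormMonomial_of_isStandard h, sub_self]
    exact G.ideal.zero_mem
  · rw [G.normalFormMonomial_of_not_isStandard h,
      ← sub_add_sub_cancel _ (G.reduction μ (G.pivot h))]
    refine G.ideal.add_mem ?_ (G.sub_normalForm_mem_of_forall fun ρ hρ =>
      ih ρ (G.lt_of_mem_support_reduction (G.exp_pivot_le h) hρ))
    rw [reduction, sub_sub_cancel]
    exact G.ideal.mul_mem_left _ (Ideal.subset_span ⟨_, rfl⟩)

theorem sub_normalForm_mem (p : MvPolynomial σ R) : p - G.normalForm p ∈ G.ideal :=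
  G.sub_normalForm_mem_of_forall fun μ _ => G.monomial_sub_normalFormMonomial_mem μ

theorem normalForm_mul_poly_of_forall {h : MvPolynomial σ R} {k : σ}
    (H : ∀ ρ ∈ h.support, G.normalForm (monomial ρ 1 * G.poly k) = 0) :
    G.normalForm (h * G.poly k) = 0 := by
  conv_lhs => rw [h.as_sum]
  rw [Finset.sum_mul, map_sum]
  refine Finset.sum_eq_zero fun ρ hρ => ?_
  rw [show monomial ρ (coeff ρ h) = coeff ρ h • monomial ρ (1 : R) by
    rw [smul_monomial, smul_eq_mul, mul_one], smul_mul_assoc, map_smul, H ρ hρ, smul_zero]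

theorem normalForm_monomial_mul_poly_pivot {μ : σ →₀ ℕ} (h : ¬ G.IsStandard μ) :
    G.normalForm (monomial (μ - single (G.pivot h) (G.exp (G.pivot h))) 1 * G.poly (G.pivot h))
      = 0 := by
  rw [← sub_sub_cancel (monomial μ 1) (_ * _), ← reduction, map_sub, normalForm_monomial,
    one_smul, G.normalFormMonomial_of_not_isStandard h, sub_self]

/-- The confluence behind Buchberger's first criterion: `X ^ ν * poly i` is reduced at the
pivot of `ν + single i (exp i)`, which may be some `j ≠ i`; since `X i ^ exp i` and
`X j ^ exp j` are coprime, `monomial_add_single_mul_poly` rewrites it through strictly smaller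
multiples of the generators. -/
theorem normalForm_monomial_mul_poly (ν : σ →₀ ℕ) (i : σ) :
    G.normalForm (monomial ν 1 * G.poly i) = 0 := by
  suffices ∀ μ ν i, ν + single i (G.exp i) = μ → G.normalForm (monomial ν 1 * G.poly i) = 0 from
    this _ ν i rfl
  intro μ
  induction μ using m.wellFounded_lt.induction with
  | _ μ ih =>
  intro ν i hνμ
  have hns : ¬ G.IsStandard μ := fun h => (h i).not_ge (by simp [← hνμ])
  set j := G.pivot hns
  by_cases hij : i = j
  · have hν : ν = μ - single j (G.exp j) := by rw [← hij, ← hνμ, add_tsub_cancel_right]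
    rw [hν, hij]
    exact G.normalForm_monomial_mul_poly_pivot hns
  have hj : G.exp j ≤ ν j := calc
    G.exp j ≤ μ j := G.exp_pivot_le hns
    _ = ν j := by simp [← hνμ, hij]
  set δ := ν - single j (G.exp j)
  have hδ : δ + single j (G.exp j) = ν := tsub_add_cancel_of_le (Finsupp.single_le_iff.mpr hj)
  have hδji : δ + single j (G.exp j) + single i (G.exp i) = μ := by rw [hδ, hνμ]
  have hδij : δ + single i (G.exp i) + single j (G.exp j) = μ := by rw [add_right_comm, hδji]
  have htail : ∀ k l, δ + single k (G.exp k) + single l (G.exp l) = μ →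
      G.normalForm (monomial δ 1 * G.tail k * G.poly l) = 0 := fun k l hkl =>
    G.normalForm_mul_poly_of_forall fun ρ hρ => ih _ (by
      rw [← hkl, map_add, map_add _ (δ + _)]
      exact add_lt_add_left (MonomialOrder.lt_of_mem_support_monomial_mul
        (fun _ => G.lt_of_mem_support_tail) hρ) _) ρ l rfl
  rw [← hδ, monomial_add_single_mul_poly, map_sub, map_add, htail i j hδij, htail j i hδji,
    eq_tsub_of_add_eq hδij, G.normalForm_monomial_mul_poly_pivot hns, add_zero, sub_zero]

theorem normalForm_mul_poly (p : MvPolynomial σ R) (i : σ) : G.normalForm (p * G.poly i) = 0 :=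
  G.normalForm_mul_poly_of_forall fun ρ _ => G.normalForm_monomial_mul_poly ρ i

theorem normalForm_eq_zero_of_mem {p : MvPolynomial σ R} (hp : p ∈ G.ideal) :
    G.normalForm p = 0 := by
  obtain ⟨c, rfl⟩ := Finsupp.mem_ideal_span_range_iff_exists_finsupp.mp hp
  rw [Finsupp.sum, map_sum]
  exact Finset.sum_eq_zero fun i _ => G.normalForm_mul_poly _ i

noncomputable def quotNormalForm : (MvPolynomial σ R ⧸ G.ideal) →ₗ[R] MvPolynomial σ R :=
  (G.ideal.restrictScalars R).liftQ G.normalForm (fun _ => G.normalForm_eq_zero_of_mem) ∘ₗ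
    (Submodule.Quotient.restrictScalarsEquiv R G.ideal).symm.toLinearMap

theorem quotNormalForm_mk (p : MvPolynomial σ R) :
    G.quotNormalForm (Ideal.Quotient.mk G.ideal p) = G.normalForm p :=
  rfl

theorem finite_setOf_isStandard [Finite σ] : {μ | G.IsStandard μ}.Finite := by
  classical
  exact (Set.finite_Iic (Finsupp.equivFunOnFinite.symm G.exp)).subset fun _ h i => (h i).le

theorem finite_quotient [Finite σ] : Module.Finite R (MvPolynomial σ R ⧸ G.ideal) := by
  classical
  let π := Ideal.Quotient.mkₐ R G.ideal
  refine ⟨Submodule.fg_def.mpr ⟨_, G.finite_setOf_isStandard.image fun μ => π (monomial μ 1),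
    eq_top_iff.mpr fun a _ => ?_⟩⟩
  obtain ⟨p, rfl⟩ := Ideal.Quotient.mkₐ_surjective R G.ideal a
  rw [show π p = π (G.normalForm p) from Ideal.Quotient.eq.mpr (G.sub_normalForm_mem p),
    (G.normalForm p).as_sum, map_sum]
  refine Submodule.sum_mem _ fun μ hμ => ?_
  rw [← mul_one (coeff μ _), ← smul_eq_mul, ← smul_monomial, map_smul]
  exact Submodule.smul_mem _ _
    (Submodule.subset_span ⟨μ, G.isStandard_of_mem_support_normalForm hμ, rfl⟩)

theorem coeff_normalForm_mul_monomial (r : MvPolynomial σ R) (τ ν : σ →₀ ℕ) :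
    coeff ν (G.normalForm (r * monomial τ 1)) =
      ∑ c ∈ r.support, coeff c r * coeff ν (G.normalFormMonomial (c + τ)) := by
  conv_lhs => rw [r.as_sum]
  simp only [Finset.sum_mul, monomial_mul, mul_one, map_sum, normalForm_monomial, coeff_sum,
    coeff_smul, smul_eq_mul]

noncomputable def maxStandard [Finite σ] : σ →₀ ℕ :=
  Finsupp.equivFunOnFinite.symm fun i => G.exp i - 1

theorem eq_zero_of_forall_coeff_quotNormalForm_mul [Finite σ] (hpos : ∀ i, 0 < G.exp i)
    (a : MvPolynomial σ R ⧸ G.ideal)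
    (ha : ∀ x, coeff G.maxStandard (G.quotNormalForm (a * x)) = 0) : a = 0 := by
  classical
  obtain ⟨p, rfl⟩ := Ideal.Quotient.mk_surjective a
  by_contra hp
  set r := G.normalForm p
  have hr : r ≠ 0 := fun hr => hp (Ideal.Quotient.eq_zero_iff_mem.mpr (by
    simpa [r, hr] using G.sub_normalForm_mem p))
  set d := m.degree r
  have hd : d ≤ G.maxStandard := fun i =>
    Nat.le_sub_one_of_lt (G.isStandard_of_mem_support_normalForm (m.degree_mem_support hr) i)
  have htop : G.IsStandard G.maxStandard := fun i => Nat.sub_lt (hpos i) one_pos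
  have hpr : G.normalForm (p * monomial (G.maxStandard - d) 1) =
      G.normalForm (r * monomial (G.maxStandard - d) 1) := by
    rw [← sub_eq_zero, ← map_sub, ← sub_mul]
    exact G.normalForm_eq_zero_of_mem (G.ideal.mul_mem_right _ (G.sub_normalForm_mem p))
  have := ha (Ideal.Quotient.mk _ (monomial (G.maxStandard - d) 1))
  rw [← map_mul, quotNormalForm_mk, hpr, coeff_normalForm_mul_monomial,
    Finset.sum_eq_single d] at this
  · rw [add_tsub_cancel_of_le hd, G.normalFormMonomial_of_isStandard htop, coeff_monomial,
      if_pos rfl, mul_one] at this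
    exact m.leadingCoeff_ne_zero_iff.mpr hr this
  · intro c hc hcd
    have hcd : c ≺[m] d := lt_of_le_of_ne (m.le_degree hc) (m.toSyn.injective.ne hcd)
    have := add_lt_add_left hcd (m.toSyn (G.maxStandard - d))
    rw [← map_add, ← map_add, add_tsub_cancel_of_le hd] at this
    rw [G.coeff_normalFormMonomial_eq_zero_of_lt this, mul_zero]
  · exact fun hd' => absurd (m.degree_mem_support hr) hd'

theorem exists_linearEquiv_dual {K : Type*} [Finite σ] [Field K] (G : PurePowerFamily m K)
    (hpos : ∀ i, 0 < G.exp i) :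
    ∃ e : (MvPolynomial σ K ⧸ G.ideal) ≃ₗ[K] Module.Dual K (MvPolynomial σ K ⧸ G.ideal),
      ∀ (r : MvPolynomial σ K) (a x : MvPolynomial σ K ⧸ G.ideal), e (r • a) x = e a (r • x) := by
  have := G.finite_quotient
  obtain ⟨e, he⟩ := exists_linearEquiv_dual_of_separating
    (lcoeff K G.maxStandard ∘ₗ G.quotNormalForm) (G.eq_zero_of_forall_coeff_quotNormalForm_mul hpos)
  exact ⟨e, fun r a x => by rw [he, he, smul_mul_assoc, mul_smul_comm]⟩

end PurePowerFamily

section hfirst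

open MonomialOrder

theorem hfirst_eq_sum {n : ℕ} (i : Fin n) (j : ℕ) :
    hfirst n (i + 1) j = ∑ μ ∈ Finset.univ.filter (fun μ : Sym (Fin n) j => ∀ k ∈ μ, k ≤ i),
      monomial (Multiset.toFinsupp (μ : Multiset (Fin n))) 1 := by
  simp only [hfirst, hset, prod_map_X_eq_monomial, Finset.mem_filter, Finset.mem_univ, true_and,
    Nat.lt_succ_iff, Fin.val_fin_le, Sym.val_eq_coe]

theorem degree_hfirst_and_monic {n : ℕ} (i : Fin n) (j : ℕ) :
    (lexLast (Fin n)).degree (hfirst n (i + 1) j) = Finsupp.single i j ∧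
      (lexLast (Fin n)).Monic (hfirst n (i + 1) j) := by
  rw [hfirst_eq_sum]
  refine degree_eq_and_monic_of_coeff_eq_one _ ?_ fun c hc => ?_
  · have hrep : Sym.replicate j i ∈ Finset.univ.filter (fun μ : Sym (Fin n) j => ∀ k ∈ μ, k ≤ i) :=
      Finset.mem_filter.mpr ⟨Finset.mem_univ _, fun k hk => (Sym.eq_replicate.mp rfl k hk).le⟩
    rw [coeff_sum, Finset.sum_eq_single_of_mem _ hrep]
    · rw [Sym.coe_replicate, Multiset.toFinsupp_replicate, coeff_monomial, if_pos rfl]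
    · intro μ _ hμ
      rw [coeff_monomial, if_neg fun h => hμ (Sym.coe_injective (Multiset.toFinsupp.injective ?_))]
      rw [h, Sym.coe_replicate, Multiset.toFinsupp_replicate]
  · obtain ⟨μ, hμ, hc⟩ := Finset.mem_biUnion.mp (support_sum hc)
    rw [Finset.mem_singleton.mp (support_monomial_subset hc)]
    simpa using toFinsupp_le_lexLast_single (Finset.mem_filter.mp hμ).2

noncomputable def hfirstFamily {n : ℕ} (b : Fin n → ℕ) : PurePowerFamily (lexLast (Fin n)) ℂ where
  exp := b
  poly i := hfirst n (i + 1) (b i)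
  degree_poly i := (degree_hfirst_and_monic i (b i)).1
  monic_poly i := (degree_hfirst_and_monic i (b i)).2

end hfirst

/-- For `b ∈ 𝓑'`, the `R`-module `R_b` is isomorphic to its `ℂ`-linear dual, where `R`
acts on the dual by `(r · f)(m) = f(r · m)`: there is a `ℂ`-linear isomorphism
intertwining the two `R`-actions. -/
theorem stmt10 {n : ℕ} (b : Fin n → ℕ) (hb : Bprime b) :
    ∃ e : (MvPolynomial (Fin n) ℂ ⧸ Ib b) ≃ₗ[ℂ]
        Module.Dual ℂ (MvPolynomial (Fin n) ℂ ⧸ Ib b),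
      ∀ (r : MvPolynomial (Fin n) ℂ) (m x : MvPolynomial (Fin n) ℂ ⧸ Ib b),
        e (r • m) x = e m (r • x) :=
  (hfirstFamily b).exists_linearEquiv_dual hb.1
end

section
/- Let 1 ≤ ℓ ≤ k ≤ n and let J_k ⊆ R = ℂ[x_1,…,x_n] be the ideal generated by all non-constant polynomials in x_1,…,x_k that are symmetric in x_1,…,x_k (i.e. invariant under all permutations of x_1,…,x_k) and have zero constant term. Then h_a(x_1,…,x_ℓ) ∈ J_k for every integer a > k − ℓ. -/
open MvPolynomial

/-- The ideal `J_k` generated by all non-constant polynomials in the variables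
`x_1, …, x_k` (0-based indices `0, …, k-1`) that are symmetric in these variables
(invariant under every permutation fixing the remaining variables) and have zero
constant term. -/
noncomputable def Jk (n k : ℕ) : Ideal (MvPolynomial (Fin n) ℂ) :=
  Ideal.span {p : MvPolynomial (Fin n) ℂ |
    p ∉ Set.range (C : ℂ → MvPolynomial (Fin n) ℂ) ∧
    (∀ m ∈ p.support, ∀ i : Fin n, m i ≠ 0 → (i : ℕ) < k) ∧
    (∀ σ : Equiv.Perm (Fin n), (∀ i : Fin n, k ≤ (i : ℕ) → σ i = i) → rename σ p = p) ∧
    constantCoeff p = 0}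

section Stmt13Aux

variable {n : ℕ}

lemma prod_map_X_eq_monomial (m : Multiset (Fin n)) :
    ((m.map X).prod : MvPolynomial (Fin n) ℂ) = monomial m.toFinsupp 1 := by
  induction m using Multiset.induction with
  | empty => simp
  | cons a s ih =>
    have : a ::ₘ s = {a} + s := by simp [Multiset.singleton_add]
    rw [Multiset.map_cons, Multiset.prod_cons, ih, this, Multiset.toFinsupp_add,
      Multiset.toFinsupp_singleton, X, monomial_mul, one_mul]

lemma constantCoeff_hset (S : Finset (Fin n)) (j : ℕ) (hj : j ≠ 0) :
    constantCoeff (hset n S j) = 0 := by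
  rw [hset, map_sum]
  refine Finset.sum_eq_zero fun μ _ => ?_
  rw [map_multiset_prod, Multiset.map_map]
  have hne : μ.val ≠ 0 := by
    intro h
    have := μ.2
    rw [h] at this
    simp at this
    exact hj this.symm
  obtain ⟨i, hi⟩ := Multiset.exists_mem_of_ne_zero hne
  refine Multiset.prod_eq_zero ?_
  have : (0 : ℂ) = (constantCoeff ∘ X) i := by simp
  rw [this]
  exact Multiset.mem_map_of_mem _ hi

lemma hset_ne_zero (S : Finset (Fin n)) (hS : S.Nonempty) (j : ℕ) :
    hset n S j ≠ 0 := by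
  intro h
  have h1 : eval (fun _ => (1:ℂ)) (hset n S j) =
      ((Finset.univ.filter (fun μ : Sym (Fin n) j => ∀ i ∈ μ, i ∈ S)).card : ℂ) := by
    rw [hset, map_sum]
    rw [Finset.sum_congr rfl (fun μ _ => ?_)]
    · rw [Finset.sum_const, nsmul_eq_mul, mul_one]
    · rw [map_multiset_prod, Multiset.map_map]
      have : (Multiset.map (⇑(eval fun _ => (1:ℂ)) ∘ X) μ.val) =
          Multiset.map (fun _ => (1:ℂ)) μ.val := by
        refine Multiset.map_congr rfl fun i _ => ?_
        simp
      rw [this]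
      simp
  rw [h, map_zero] at h1
  obtain ⟨i, hi⟩ := hS
  have hmem : (Sym.replicate j i) ∈
      Finset.univ.filter (fun μ : Sym (Fin n) j => ∀ i ∈ μ, i ∈ S) := by
    simp only [Finset.mem_filter, Finset.mem_univ, true_and]
    intro i' hi'
    rw [Sym.mem_replicate] at hi'
    rw [hi'.2]; exact hi
  have : (Finset.univ.filter (fun μ : Sym (Fin n) j => ∀ i ∈ μ, i ∈ S)).card ≠ 0 := by
    intro hc
    rw [Finset.card_eq_zero] at hc
    rw [hc] at hmem
    simp at hmem
  exact this (by exact_mod_cast h1.symm)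

lemma hset_support (S : Finset (Fin n)) (j : ℕ) :
    ∀ m ∈ (hset n S j).support, ∀ i : Fin n, m i ≠ 0 → i ∈ S := by
  intro m hm i hi
  rw [mem_support_iff, hset, coeff_sum] at hm
  obtain ⟨μ, hμ, hc⟩ : ∃ μ ∈ Finset.univ.filter
      (fun μ : Sym (Fin n) j => ∀ i ∈ μ, i ∈ S),
      coeff m ((μ.val.map X).prod : MvPolynomial (Fin n) ℂ) ≠ 0 := by
    by_contra hall
    push_neg at hall
    exact hm (Finset.sum_eq_zero hall)
  rw [prod_map_X_eq_monomial, coeff_monomial] at hc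
  have hmeq : μ.val.toFinsupp = m := by
    by_contra h; rw [if_neg h] at hc; exact hc rfl
  rw [← hmeq, Multiset.toFinsupp_apply] at hi
  have : i ∈ μ.val := Multiset.count_pos.mp (Nat.pos_of_ne_zero hi)
  exact (Finset.mem_filter.mp hμ).2 i this

lemma rename_hset (S : Finset (Fin n)) (j : ℕ) (σ : Equiv.Perm (Fin n))
    (hσ : ∀ i, i ∈ S ↔ σ i ∈ S) :
    rename σ (hset n S j) = hset n S j := by
  rw [hset, map_sum]
  refine Finset.sum_nbij' (i := fun μ => Sym.map σ μ) (j := fun μ => Sym.map σ.symm μ)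
    ?_ ?_ ?_ ?_ ?_
  · intro μ hμ
    simp only [Finset.mem_filter, Finset.mem_univ, true_and] at hμ ⊢
    intro i hi
    rw [Sym.mem_map] at hi
    obtain ⟨b, hb, rfl⟩ := hi
    exact (hσ b).mp (hμ b hb)
  · intro μ hμ
    simp only [Finset.mem_filter, Finset.mem_univ, true_and] at hμ ⊢
    intro i hi
    rw [Sym.mem_map] at hi
    obtain ⟨b, hb, rfl⟩ := hi
    have := hμ b hb
    have h2 := (hσ (σ.symm b)).mpr (by simpa using this)
    exact h2
  · intro μ _; simp [Sym.map_map]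
  · intro μ _; simp [Sym.map_map]
  · intro μ _
    rw [map_multiset_prod, Multiset.map_map]
    have : (Sym.map σ μ).val = μ.val.map σ := rfl
    rw [this, Multiset.map_map]
    congr 1
    exact Multiset.map_congr rfl fun i _ => by simp

lemma hset_insert (S : Finset (Fin n)) (y : Fin n) (hy : y ∉ S) (j : ℕ) :
    hset n (insert y S) (j+1) = hset n S (j+1) + X y * hset n (insert y S) j := by
  have e1 : (Finset.univ.filter (fun μ : Sym (Fin n) (j+1) => ∀ i ∈ μ, i ∈ insert y S)).filter
      (fun μ => ¬ y ∈ μ) = Finset.univ.filter (fun μ : Sym (Fin n) (j+1) => ∀ i ∈ μ, i ∈ S) := by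
    ext μ
    simp only [Finset.mem_filter, Finset.mem_univ, true_and, Finset.mem_insert]
    constructor
    · rintro ⟨h1, h2⟩ i hi
      rcases h1 i hi with h | h
      · exact absurd (h ▸ hi) h2
      · exact h
    · intro h
      exact ⟨fun i hi => Or.inr (h i hi), fun hy' => hy (h y hy')⟩
  have e2 : ∑ μ ∈ (Finset.univ.filter
        (fun μ : Sym (Fin n) (j+1) => ∀ i ∈ μ, i ∈ insert y S)).filter
        (fun μ => y ∈ μ), ((μ.val.map X).prod : MvPolynomial (Fin n) ℂ)
      = X y * hset n (insert y S) j := by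
    rw [hset, Finset.mul_sum]
    symm
    refine Finset.sum_nbij' (i := fun μ' => y ::ₛ μ')
      (j := fun μ => if h : y ∈ μ then μ.erase y h else Sym.replicate j y) ?_ ?_ ?_ ?_ ?_
    · intro μ' hμ'
      simp only [Finset.mem_filter, Finset.mem_univ, true_and] at hμ' ⊢
      refine ⟨fun i hi => ?_, Sym.mem_cons_self y μ'⟩
      rcases Sym.mem_cons.mp hi with h | h
      · rw [h]; exact Finset.mem_insert_self y S
      · exact hμ' i h
    · intro μ hμ
      simp only [Finset.mem_filter, Finset.mem_univ, true_and] at hμ ⊢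
      obtain ⟨h1, h2⟩ := hμ
      rw [dif_pos h2]
      intro i hi
      have : i ∈ μ.val := Multiset.mem_of_mem_erase (by
        have := (Sym.coe_erase h2) ▸ (Sym.mem_coe.mpr hi); exact this)
      exact h1 i (Sym.mem_coe.mp (by exact this))
    · intro μ' hμ'
      rw [dif_pos (Sym.mem_cons_self y μ')]
      exact Sym.erase_cons_head μ' y _
    · intro μ hμ
      simp only [Finset.mem_filter, Finset.mem_univ, true_and] at hμ
      rw [dif_pos hμ.2]
      exact Sym.cons_erase hμ.2
    · intro μ' hμ'
      have hv : ((y ::ₛ μ').val : Multiset (Fin n)) = y ::ₘ μ'.val := rfl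
      rw [hv, Multiset.map_cons, Multiset.prod_cons]
  conv_lhs => rw [hset]
  rw [← Finset.sum_filter_add_sum_filter_not
    (Finset.univ.filter (fun μ : Sym (Fin n) (j+1) => ∀ i ∈ μ, i ∈ insert y S))
    (fun μ : Sym (Fin n) (j+1) => y ∈ μ), e2, e1, add_comm]
  rfl

lemma hfirst_mem_Jk (k j : ℕ) (hk : 1 ≤ k) (hkn : k ≤ n) (hj : 1 ≤ j) :
    hfirst n k j ∈ Jk n k := by
  apply Ideal.subset_span
  refine ⟨?_, ?_, ?_, ?_⟩
  · rintro ⟨c, hc⟩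
    have h0 : constantCoeff (hfirst n k j) = 0 := constantCoeff_hset _ _ (by omega)
    rw [← hc, constantCoeff_C] at h0
    rw [h0, map_zero] at hc
    have hS : (Finset.univ.filter (fun i : Fin n => (i : ℕ) < k)).Nonempty :=
      ⟨⟨0, by omega⟩, by simp only [Finset.mem_filter, Finset.mem_univ, true_and]; omega⟩
    exact hset_ne_zero _ hS j hc.symm
  · intro m hm i hi
    have := hset_support _ _ m hm i hi
    simpa using this
  · intro σ hσ
    apply rename_hset
    intro i
    simp only [Finset.mem_filter, Finset.mem_univ, true_and]
    constructor
    · intro h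
      by_contra hge
      push_neg at hge
      have h1 : σ (σ i) = σ i := hσ (σ i) hge
      have h2 : σ i = i := σ.injective h1
      omega
    · intro h
      by_contra hge
      push_neg at hge
      have := hσ i hge
      omega
  · exact constantCoeff_hset _ _ (by omega)

lemma main_aux (k : ℕ) (hkn : k ≤ n) (hk : 1 ≤ k) :
    ∀ m ℓ a : ℕ, 1 ≤ ℓ → ℓ + m = k → m < a → hfirst n ℓ a ∈ Jk n k := by
  intro m
  induction m with
  | zero =>
    intro ℓ a hℓ hm ha
    have hℓk : ℓ = k := by omega
    subst hℓk
    exact hfirst_mem_Jk ℓ a hℓ hkn (by omega)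
  | succ m ih =>
    intro ℓ a hℓ hm ha
    have hℓn : ℓ < n := by omega
    set y : Fin n := ⟨ℓ, hℓn⟩ with hy_def
    have hSins : Finset.univ.filter (fun i : Fin n => (i : ℕ) < ℓ+1)
        = insert y (Finset.univ.filter (fun i : Fin n => (i : ℕ) < ℓ)) := by
      ext i
      simp only [Finset.mem_filter, Finset.mem_univ, true_and, Finset.mem_insert,
        Fin.ext_iff, hy_def]
      omega
    have hy : y ∉ Finset.univ.filter (fun i : Fin n => (i : ℕ) < ℓ) := by
      simp [hy_def]
    obtain ⟨b, rfl⟩ : ∃ b, a = b + 1 := ⟨a - 1, by omega⟩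
    have hrec := hset_insert (Finset.univ.filter (fun i : Fin n => (i : ℕ) < ℓ)) y hy b
    have heq : hfirst n ℓ (b+1) = hfirst n (ℓ+1) (b+1) - X y * hfirst n (ℓ+1) b := by
      rw [hfirst, hfirst, hfirst, hSins, hrec]
      ring
    rw [heq]
    exact Ideal.sub_mem _ (ih (ℓ+1) (b+1) (by omega) (by omega) (by omega))
      (Ideal.mul_mem_left _ _ (ih (ℓ+1) b (by omega) (by omega) (by omega)))

end Stmt13Aux

/-- For `1 ≤ ℓ ≤ k ≤ n`, the polynomial `h_a(x_1,…,x_ℓ)` lies in `J_k` for every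
`a > k − ℓ`. -/
theorem stmt13 (n k ℓ a : ℕ) (h1 : 1 ≤ ℓ) (hlk : ℓ ≤ k) (hkn : k ≤ n) (ha : k - ℓ < a) :
    hfirst n ℓ a ∈ Jk n k := by
  exact main_aux k hkn (le_trans h1 hlk) (k - ℓ) ℓ a h1 (by omega) (by omega)
end
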